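/- arXiv:2203.05783 — 2 statements merged into one kernel-verified Lean document; each statement's English description precedes it below -/
import Mathlib

section
/- Let K be a field of characteristic zero and let D = ∂_{x_1} + (a_2·x_2 + b_2)·∂_{x_2} + b_3·∂_{x_3} be the K-derivation of K[x_1,x_2,x_3] with a_2, b_2 ∈ K[x_1] and b_3 ∈ K[x_1,x_2], and set u = deg_{x_2} b_3. If D is a simple derivation, then x_2^{u+1} does not belong to Im D = D(K[x_1,x_2,x_3]); that is, there is no f ∈ K[x_1,x_2,x_3] with D(f) = x_2^{u+1}. -/
open MvPolynomial

/-- A `K`-subspace `M` of `R` is a Mathieu–Zhao space if for all `a, b ∈ R` such that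
`a ^ m ∈ M` for all `m ≥ 1`, there exists `N` such that `b * a ^ m ∈ M` for all `m ≥ N`. -/
def IsMathieuZhao (K : Type*) {R : Type*} [Field K] [CommRing R] [Algebra K R]
    (M : Submodule K R) : Prop :=
  ∀ a b : R, (∀ m : ℕ, 1 ≤ m → a ^ m ∈ M) →
    ∃ N : ℕ, ∀ m : ℕ, N ≤ m → b * a ^ m ∈ M

/-- A `K`-derivation `D` of `R` is simple if the only ideals `I` of `R` with `D(I) ⊆ I`
are `0` and `R`. -/
def Derivation.IsSimple {K R : Type*} [CommRing K] [CommRing R] [Algebra K R]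
    (D : Derivation K R R) : Prop :=
  ∀ I : Ideal R, (∀ a ∈ I, D a ∈ I) → I = ⊥ ∨ I = ⊤

/-!
Write `x₁, x₂, x₃` for `X 0, X 1, X 2` and `∂ᵢ` for `pderiv`. A simple derivation has no
Darboux elements `w ∣ D w` other than constants; in particular `ker D = K`, and `a₂` is not a
constant `α`, since otherwise `D (x₂ - B) = α (x₂ - B)` for a solution `B ∈ K[x₁]` of
`B' = α B + b₂`.

Suppose `D f = x₂ ^ (u + 1)`. No coefficient of `D` involves `x₃`, so `∂₃` commutes with `D`
and `∂₃ f ∈ ker D` is a constant `c`; then `g = f - c x₃` has `∂₃ g = 0` and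
`D g = x₂ ^ (u + 1) - c b₃`. On such `g` we have `∂₂ D = (D + a₂) ∂₂`, hence for `m ≥ u + 1`
`(D + m a₂) (∂₂ᵐ g) = ∂₂ᵐ (D g) = ∂₂ᵐ x₂ ^ (u + 1)`, a constant which is `(u + 1)!` for
`m = u + 1`. If `∂₂ᵘ⁺¹ g = 0` this is absurd. Otherwise let `m` be the `x₂`-degree of `g`:
then `h = ∂₂ᵐ g ≠ 0` satisfies `D h = ∂₁ h`, and `∂₁ h + m a₂ h` has total degree
`deg a₂ + deg h > 0`, so it cannot be constant.
-/

namespace Derivation.IsSimple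

theorem eq_zero_or_isUnit_of_dvd {K R : Type*} [CommRing K] [CommRing R] [Algebra K R]
    {D : Derivation K R R} (hD : D.IsSimple) {w : R} (hw : w ∣ D w) : w = 0 ∨ IsUnit w := by
  have hstable : ∀ a ∈ Ideal.span {w}, D a ∈ Ideal.span {w} := by
    simp only [Ideal.mem_span_singleton]
    rintro _ ⟨r, rfl⟩
    rw [D.leibniz, smul_eq_mul, smul_eq_mul]
    exact dvd_add (dvd_mul_right w _) (dvd_mul_of_dvd_right hw r)
  simpa [Ideal.span_singleton_eq_bot, Ideal.span_singleton_eq_top] using hD _ hstable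

theorem exists_eq_C_of_dvd {σ R : Type*} [CommRing R] [IsReduced R]
    {D : Derivation R (MvPolynomial σ R) (MvPolynomial σ R)} (hD : D.IsSimple)
    {w : MvPolynomial σ R} (hw : w ∣ D w) : ∃ r, w = C r := by
  rcases hD.eq_zero_or_isUnit_of_dvd hw with rfl | hunit
  · exact ⟨0, C_0.symm⟩
  · obtain ⟨r, -, rfl⟩ := isUnit_iff_eq_C_of_isReduced.mp hunit
    exact ⟨r, rfl⟩

end Derivation.IsSimple

namespace Polynomial

variable {K : Type*} [Field K] [CharZero K]

theorem exists_derivative_eq (t : K[X]) : ∃ B : K[X], derivative B = t := by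
  induction t using Polynomial.induction_on' with
  | add p q hp hq =>
    obtain ⟨P, rfl⟩ := hp
    obtain ⟨Q, rfl⟩ := hq
    exact ⟨P + Q, derivative_add⟩
  | monomial n a =>
    refine ⟨monomial (n + 1) (a / (n + 1)), ?_⟩
    rw [derivative_monomial, Nat.add_sub_cancel, Nat.cast_add_one,
      div_mul_cancel₀ _ (Nat.cast_add_one_ne_zero n)]

theorem exists_derivative_eq_C_mul_add (α : K) (t : K[X]) :
    ∃ B : K[X], derivative B = C α * B + t := by
  rcases eq_or_ne α 0 with rfl | hα
  · simpa using exists_derivative_eq t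
  -- `B = -∑ α⁻ᵏ⁻¹ t⁽ᵏ⁾`: the Neumann series of `(d/dX - α)⁻¹ t`, finite as `d/dX` lowers degrees.
  set S : ℕ → K[X] := fun k => C (α⁻¹ ^ k) * derivative^[k] t
  refine ⟨-C α⁻¹ * ∑ k ∈ Finset.range (t.natDegree + 1), S k, ?_⟩
  have hS : ∀ k, derivative (S k) = C α * S (k + 1) := fun k => by
    simp only [S, derivative_C_mul, Function.iterate_succ_apply', ← mul_assoc, ← C_mul, pow_succ,
      mul_left_comm α, mul_inv_cancel₀ hα, mul_one]
  have hSN : S (t.natDegree + 1) = 0 := by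
    simp [S, iterate_derivative_eq_zero (Nat.lt_succ_self _)]
  have hS0 : S 0 = t := by simp [S]
  have htel := Finset.sum_range_sub' S (t.natDegree + 1)
  rw [hSN, hS0, sub_zero, Finset.sum_sub_distrib] at htel
  have hαC : C α⁻¹ * C α = 1 := by rw [← C_mul, inv_mul_cancel₀ hα, C_1]
  rw [derivative_mul, derivative_neg, derivative_C, neg_zero, zero_mul, zero_add, derivative_sum]
  simp only [hS, ← Finset.mul_sum]
  linear_combination (C α⁻¹ * C α) * htel + t * hαC

end Polynomial

namespace MvPolynomial

section CommSemiring

variable {σ R : Type*} [CommSemiring R]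

theorem derivation_apply_eq_sum [Fintype σ]
    (D : Derivation R (MvPolynomial σ R) (MvPolynomial σ R)) (p : MvPolynomial σ R) :
    D p = ∑ i, D (X i) * pderiv i p := by
  classical
  have hsum : ∀ q, (∑ i, D (X i) • pderiv i) q = ∑ i, D (X i) * pderiv i q := fun q =>
    (congrFun (map_sum Derivation.coeFnAddMonoidHom (fun i => D (X i) • pderiv i) _) q).trans
      (by simp)
  have hD : D = ∑ i, D (X i) • pderiv i :=
    derivation_ext fun k => by simp [hsum, pderiv_X, Pi.single_apply]
  rw [← hsum, ← hD]

theorem derivation_pderiv_X (D : Derivation R (MvPolynomial σ R) (MvPolynomial σ R)) (i k : σ) :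
    D (pderiv i (X k)) = 0 := by
  by_cases h : k = i
  · simp [h]
  · simp [pderiv_X_of_ne h]

theorem pderiv_eq_zero_of_mem_supported {s : Set σ} {p : MvPolynomial σ R}
    (hp : p ∈ supported R s) {i : σ} (hi : i ∉ s) : pderiv i p = 0 :=
  pderiv_eq_zero_of_notMem_vars fun h => hi (mem_supported.mp hp h)

theorem iterate_pderiv_eq_zero_of_degreeOf_lt {i : σ} {p : MvPolynomial σ R} {N : ℕ}
    (h : degreeOf i p < N) : (pderiv i)^[N] p = 0 := by
  rw [degreeOf_lt_iff (by omega)] at h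
  induction N generalizing p with
  | zero => simpa [eq_zero_iff, notMem_support_iff] using h
  | succ N ih =>
    rw [Function.iterate_succ_apply]
    refine ih fun m hm => ?_
    have hcoeff : coeff (m + Finsupp.single i 1) p ≠ 0 := by
      rw [mem_support_iff, coeff_pderiv] at hm
      exact left_ne_zero_of_mul hm
    simpa using h _ (mem_support_iff.mpr hcoeff)

theorem iterate_pderiv_X_pow_of_le (i : σ) {n m : ℕ} (h : n ≤ m) :
    (pderiv i)^[m] (X i ^ n : MvPolynomial σ R) = C (n.descFactorial m : R) := by
  have hiter : ∀ (k : ℕ) (P : Polynomial R), (pderiv i)^[k] (Polynomial.aeval (X i) P)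
      = Polynomial.aeval (X i : MvPolynomial σ R) (Polynomial.derivative^[k] P) := by
    intro k
    induction k with
    | zero => simp
    | succ k ih => intro P; simp [Function.iterate_succ_apply', ih]
  simpa [Nat.sub_eq_zero_of_le h, Polynomial.iterate_derivative_X_pow_eq_C_mul] using
    hiter m (Polynomial.X ^ n)

theorem totalDegree_pderiv_le (i : σ) (p : MvPolynomial σ R) :
    (pderiv i p).totalDegree ≤ p.totalDegree := by
  refine Finset.sup_le fun m hm => ?_
  have hcoeff : coeff (m + Finsupp.single i 1) p ≠ 0 := by
    rw [mem_support_iff, coeff_pderiv] at hm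
    exact left_ne_zero_of_mul hm
  calc (m.sum fun _ e => e) ≤ (m + Finsupp.single i 1).sum fun _ e => e := by
        rw [Finsupp.sum_add_index' (fun _ => rfl) (fun _ _ _ => rfl)]; omega
    _ ≤ p.totalDegree := le_totalDegree (mem_support_iff.mpr hcoeff)

end CommSemiring

section CommRing

variable {σ R : Type*} [CommRing R]

theorem pderiv_derivation_apply [Fintype σ]
    (D : Derivation R (MvPolynomial σ R) (MvPolynomial σ R)) (i : σ) (p : MvPolynomial σ R) :
    pderiv i (D p) = D (pderiv i p) + ∑ k, pderiv i (D (X k)) * pderiv k p := by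
  have h := derivation_apply_eq_sum ⁅(pderiv i : Derivation R (MvPolynomial σ R) _), D⁆ p
  simp only [Derivation.commutator_apply, derivation_pderiv_X, sub_zero] at h
  rw [← h, add_sub_cancel]

theorem pderiv_comm (i j : σ) (p : MvPolynomial σ R) :
    pderiv i (pderiv j p) = pderiv j (pderiv i p) := by
  have h : ⁅(pderiv i : Derivation R (MvPolynomial σ R) _), pderiv j⁆ = 0 :=
    derivation_ext fun k => by
      rw [Derivation.commutator_apply, derivation_pderiv_X, derivation_pderiv_X, sub_zero,
        Derivation.zero_apply]
  have hp := DFunLike.congr_fun h p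
  rwa [Derivation.commutator_apply, Derivation.zero_apply, sub_eq_zero] at hp

theorem pderiv_iterate_pderiv_eq_zero {i : σ} {p : MvPolynomial σ R} (h : pderiv i p = 0)
    (j : σ) (m : ℕ) : pderiv i ((pderiv j)^[m] p) = 0 := by
  rw [Function.Commute.iterate_right (fun q => pderiv_comm i j q) m p, h, iterate_map_zero]

theorem pderiv_add_mul_ne_C [IsDomain R] {a h : MvPolynomial σ R} (ha : 0 < a.totalDegree)
    (hh : h ≠ 0) (i : σ) (r : R) : pderiv i h + a * h ≠ C r := by
  have ha0 : a ≠ 0 := by rintro rfl; simp at ha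
  have hdeg : (pderiv i h + a * h).totalDegree = a.totalDegree + h.totalDegree := by
    rw [totalDegree_add_eq_right_of_totalDegree_lt, totalDegree_mul_of_isDomain ha0 hh]
    rw [totalDegree_mul_of_isDomain ha0 hh]
    exact (totalDegree_pderiv_le i h).trans_lt (by omega)
  intro hC
  rw [hC, totalDegree_C] at hdeg
  omega

end CommRing

end MvPolynomial

section

variable {K : Type*} [Field K] {a2 b2 b3 : MvPolynomial (Fin 3) K}
  {D : Derivation K (MvPolynomial (Fin 3) K) (MvPolynomial (Fin 3) K)}

theorem totalDegree_pos_of_isSimple [CharZero K] (hD1 : D (X 0) = 1)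
    (hD2 : D (X 1) = a2 * X 1 + b2) (hb2 : b2 ∈ supported K ({0} : Set (Fin 3)))
    (hD : D.IsSimple) : 0 < a2.totalDegree := by
  refine Nat.pos_of_ne_zero fun h0 => ?_
  obtain ⟨α, rfl⟩ : ∃ α, a2 = C α := ⟨_, totalDegree_eq_zero_iff_eq_C.mp h0⟩
  obtain ⟨t, rfl⟩ : ∃ t : Polynomial K, Polynomial.aeval (X 0) t = b2 := by
    rwa [supported_eq_adjoin_X, Set.image_singleton, Algebra.adjoin_singleton_eq_range_aeval] at hb2
  obtain ⟨B, hB⟩ := Polynomial.exists_derivative_eq_C_mul_add α t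
  have hDw : D (X 1 - Polynomial.aeval (X 0) B) = C α * (X 1 - Polynomial.aeval (X 0) B) := by
    rw [map_sub, hD2, Derivation.map_aeval, hD1, hB]
    simp only [map_add, map_mul, Polynomial.aeval_C, algebraMap_eq, smul_eq_mul, mul_one]
    ring
  obtain ⟨r, hr⟩ := hD.exists_eq_C_of_dvd (hDw ▸ dvd_mul_left _ _)
  simpa using congrArg (pderiv 1) hr

theorem pderiv_one_apply_of_pderiv_two_eq_zero (hD1 : D (X 0) = 1)
    (hD2 : D (X 1) = a2 * X 1 + b2) (ha2 : a2 ∈ supported K ({0} : Set (Fin 3)))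
    (hb2 : b2 ∈ supported K ({0} : Set (Fin 3))) {q : MvPolynomial (Fin 3) K}
    (hq : pderiv 2 q = 0) : pderiv 1 (D q) = D (pderiv 1 q) + a2 * pderiv 1 q := by
  rw [pderiv_derivation_apply, Fin.sum_univ_three, hD1, hD2, hq]
  simp [pderiv_eq_zero_of_mem_supported ha2, pderiv_eq_zero_of_mem_supported hb2]

theorem iterate_pderiv_one_apply_of_pderiv_two_eq_zero (hD1 : D (X 0) = 1)
    (hD2 : D (X 1) = a2 * X 1 + b2) (ha2 : a2 ∈ supported K ({0} : Set (Fin 3)))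
    (hb2 : b2 ∈ supported K ({0} : Set (Fin 3))) {q : MvPolynomial (Fin 3) K}
    (hq : pderiv 2 q = 0) (m : ℕ) :
    (pderiv 1)^[m] (D q) = D ((pderiv 1)^[m] q) + m * a2 * (pderiv 1)^[m] q := by
  induction m with
  | zero => simp
  | succ m ih =>
    rw [Function.iterate_succ_apply', Function.iterate_succ_apply', ih, map_add,
      pderiv_one_apply_of_pderiv_two_eq_zero hD1 hD2 ha2 hb2
        (pderiv_iterate_pderiv_eq_zero hq 1 m),
      pderiv_mul, pderiv_mul, pderiv_eq_zero_of_mem_supported ha2 (by simp)]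
    simp only [Derivation.map_natCast, zero_mul, mul_zero, add_zero, zero_add, Nat.cast_add,
      Nat.cast_one]
    ring

theorem apply_ne_X_one_pow_sub_C_mul [CharZero K] (hD1 : D (X 0) = 1)
    (hD2 : D (X 1) = a2 * X 1 + b2) (ha2 : a2 ∈ supported K ({0} : Set (Fin 3)))
    (hb2 : b2 ∈ supported K ({0} : Set (Fin 3))) (ha2_pos : 0 < a2.totalDegree) {u : ℕ}
    (hb3 : degreeOf 1 b3 ≤ u) {g : MvPolynomial (Fin 3) K} (hg : pderiv 2 g = 0) (c : K) :
    D g ≠ X 1 ^ (u + 1) - C c * b3 := by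
  intro hDg
  have hiterate : ∀ m, u + 1 ≤ m → D ((pderiv 1)^[m] g) + (m : MvPolynomial (Fin 3) K) * a2 *
      (pderiv 1)^[m] g = C ((u + 1).descFactorial m : K) := by
    intro m hm
    have hb3m : (pderiv 1)^[m] (C c * b3) = 0 :=
      iterate_pderiv_eq_zero_of_degreeOf_lt ((degreeOf_C_mul_le b3 1 c).trans_lt (by omega))
    rw [← iterate_pderiv_one_apply_of_pderiv_two_eq_zero hD1 hD2 ha2 hb2 hg, hDg,
      iterate_map_sub, hb3m, sub_zero, iterate_pderiv_X_pow_of_le 1 hm]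
  have hex : ∃ k, (pderiv 1)^[k] g = 0 :=
    ⟨_, iterate_pderiv_eq_zero_of_degreeOf_lt (Nat.lt_succ_self _)⟩
  classical
  rcases le_or_gt (Nat.find hex) (u + 1) with hle | hlt
  · have h0 : (pderiv 1)^[u + 1] g = 0 := by
      rw [← Nat.sub_add_cancel hle, Function.iterate_add_apply, Nat.find_spec hex,
        iterate_map_zero]
    have hfact := hiterate (u + 1) le_rfl
    rw [h0, map_zero, mul_zero, add_zero, Nat.descFactorial_self, eq_comm, C_eq_zero,
      Nat.cast_eq_zero] at hfact
    exact Nat.factorial_ne_zero _ hfact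
  · obtain ⟨m, hm⟩ : ∃ m, Nat.find hex = m + 1 := ⟨Nat.find hex - 1, by omega⟩
    set h := (pderiv 1)^[m] g
    have hne : h ≠ 0 := Nat.find_min hex (by omega)
    have h1 : pderiv 1 h = 0 := by
      rw [← Function.iterate_succ_apply' (pderiv 1), Nat.succ_eq_add_one, ← hm, Nat.find_spec hex]
    have hDh : D h = pderiv 0 h := by
      rw [derivation_apply_eq_sum, Fin.sum_univ_three, hD1, h1, pderiv_iterate_pderiv_eq_zero hg]
      simp
    have hm0 : (m : MvPolynomial (Fin 3) K) ≠ 0 := Nat.cast_ne_zero.mpr (by omega)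
    refine pderiv_add_mul_ne_C (a := (m : MvPolynomial (Fin 3) K) * a2) ?_ hne 0
      ((u + 1).descFactorial m) ?_
    · rw [totalDegree_mul_of_isDomain hm0 (by rintro rfl; simp at ha2_pos)]
      omega
    · rw [← hDh]
      exact hiterate m (by omega)

end

/-- For `D = ∂_{x₁} + (a₂ x₂ + b₂) ∂_{x₂} + b₃ ∂_{x₃}` with
`a₂, b₂ ∈ K[x₁]`, `b₃ ∈ K[x₁, x₂]` and `u = deg_{x₂} b₃`: if `D` is simple,
then `x₂^(u+1) ∉ Im D`. -/
theorem statement16 (K : Type*) [Field K] [CharZero K]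
    (a2 b2 b3 : MvPolynomial (Fin 3) K)
    (ha2 : a2 ∈ supported K ({0} : Set (Fin 3)))
    (hb2 : b2 ∈ supported K ({0} : Set (Fin 3)))
    (hb3 : b3 ∈ supported K ({0, 1} : Set (Fin 3)))
    (u : ℕ) (hu : u = degreeOf (1 : Fin 3) b3)
    (D : Derivation K (MvPolynomial (Fin 3) K) (MvPolynomial (Fin 3) K))
    (hD1 : D (X 0) = 1)
    (hD2 : D (X 1) = a2 * X 1 + b2)
    (hD3 : D (X 2) = b3)
    (hD : Derivation.IsSimple D) :
    ¬ ∃ f : MvPolynomial (Fin 3) K, D f = X 1 ^ (u + 1) := by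
  rintro ⟨f, hf⟩
  have hcomm : pderiv 2 (D f) = D (pderiv 2 f) := by
    rw [pderiv_derivation_apply, Fin.sum_univ_three, hD1, hD2, hD3]
    simp [pderiv_eq_zero_of_mem_supported ha2, pderiv_eq_zero_of_mem_supported hb2,
      pderiv_eq_zero_of_mem_supported hb3]
  obtain ⟨c, hc⟩ : ∃ c, pderiv 2 f = C c := by
    refine hD.exists_eq_C_of_dvd ?_
    rw [← hcomm, hf, pderiv_pow, pderiv_X_of_ne (by decide), mul_zero]
    exact dvd_zero _
  refine apply_ne_X_one_pow_sub_C_mul hD1 hD2 ha2 hb2 (totalDegree_pos_of_isSimple hD1 hD2 hb2 hD)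
    hu.ge (g := f - C c * X 2) ?_ c ?_
  · simp [hc]
  · simp [hf, hD3]
end

section
/- Let K be a field of characteristic zero and let D = ∂_{x_1} + (a_2·x_2 + b_2)·∂_{x_2} + b_3·∂_{x_3} be the K-derivation of K[x_1,x_2,x_3] with a_2, b_2 ∈ K[x_1] and b_3 ∈ K[x_1,x_2]. Write b_3 = b_3^{(v)}·x_2^v + ⋯ + b_3^{(1)}·x_2 + b_3^{(0)} with each b_3^{(j)} ∈ K[x_1] and b_3^{(v)} ≠ 0 (so v = deg_{x_2} b_3). If deg a_2 > deg b_3^{(v)} (degrees in x_1), then x_2^{v+1} does not belong to Im D = D(K[x_1,x_2,x_3]); that is, there is no f ∈ K[x_1,x_2,x_3] with D(f) = x_2^{v+1}. -/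
/-!
View `K[x₁, x₂, x₃]` as `K[x][y][z]`. Then `D` acts on `f = ∑ fₙ zⁿ` as
`δ + b₃ ∂_z`, where `δ = ∂ₓ + (a₂ y + b₂) ∂_y` acts on each coefficient `fₙ ∈ K[x][y]`,
so `D f = y ^ (v + 1)` says `δ fₙ + (n + 1) b₃ fₙ₊₁ = [n = 0] y ^ (v + 1)` for all `n`.
Since `deg a₂ > 0`, `δ` preserves every positive `y`-degree and raises the `x`-degree of the
leading coefficient by `deg a₂`. Descending from the top coefficient of `f`, this puts every
`fₙ` with `n ≥ 1` in `K[x]`, and even in `K` when `v ≥ 1`: a non-constant `fₙ₊₁` would need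
`δ fₙ` to match `b₃ fₙ₊₁` at `y`-degree `v`, which `deg b₃⁽ᵛ⁾ < deg a₂` forbids.
But then `δ f₀ = y ^ (v + 1) - b₃ f₁` has `y`-degree `v + 1` and leading coefficient `1`,
whereas `δ f₀` has `y`-degree `0` or a leading coefficient of positive `x`-degree.
-/

open MvPolynomial

open scoped Polynomial

namespace Polynomial

section ImplicitDeriv

variable {R A : Type*} [CommRing R] [CommRing A] [Algebra R A]

noncomputable def _root_.Derivation.implicitDeriv (d : Derivation R A A) (v : A[X]) :
    Derivation R A[X] A[X] :=
  PolynomialModule.equivPolynomialSelf.compDer d.mapCoeffs + v • derivative'.restrictScalars R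

theorem _root_.Derivation.coeff_implicitDeriv (d : Derivation R A A) (v p : A[X]) (n : ℕ) :
    (d.implicitDeriv v p).coeff n = d (p.coeff n) + (v * derivative p).coeff n := by
  simp only [Derivation.implicitDeriv, Derivation.add_apply, coeff_add, Derivation.smul_apply,
    smul_eq_mul, Derivation.restrictScalars_apply, derivative'_apply]
  rfl

theorem _root_.Derivation.implicitDeriv_C (d : Derivation R A A) (v : A[X]) (a : A) :
    d.implicitDeriv v (C a) = C (d a) := by
  ext n
  rw [Derivation.coeff_implicitDeriv, derivative_C, mul_zero, coeff_zero, add_zero, coeff_C,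
    coeff_C]
  split_ifs <;> simp

theorem _root_.Derivation.implicitDeriv_X (d : Derivation R A A) (v : A[X]) :
    d.implicitDeriv v X = v := by
  ext n
  rw [Derivation.coeff_implicitDeriv, derivative_X, mul_one, coeff_X]
  split_ifs <;> simp

end ImplicitDeriv

theorem degree_derivative_add_mul {R : Type*} [CommRing R] [IsDomain R]
    {c g : R[X]} (hc : c ≠ 0) (hg : g ≠ 0) : (derivative g + c * g).degree = (c * g).degree :=
  degree_add_eq_right_of_degree_lt <|
    (degree_derivative_lt hg).trans_le (mul_comm g c ▸ degree_le_mul_left g hc)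

theorem coeff_sum_range_C_mul_X_pow {R : Type*} [Semiring R] (t : ℕ → R) (v n : ℕ) :
    (∑ j ∈ Finset.range (v + 1), C (t j) * X ^ j).coeff n = if n ≤ v then t n else 0 := by
  simp

theorem natDegree_sum_range_C_mul_X_pow {R : Type*} [Semiring R] {t : ℕ → R} {v : ℕ}
    (hv : t v ≠ 0) : (∑ j ∈ Finset.range (v + 1), C (t j) * X ^ j).natDegree = v :=
  natDegree_eq_of_le_of_coeff_ne_zero
    (natDegree_le_iff_coeff_eq_zero.2 fun n hn => by
      rw [coeff_sum_range_C_mul_X_pow, if_neg hn.not_ge])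
    (by rwa [coeff_sum_range_C_mul_X_pow, if_pos le_rfl])

theorem leadingCoeff_sum_range_C_mul_X_pow {R : Type*} [Semiring R] {t : ℕ → R} {v : ℕ}
    (hv : t v ≠ 0) : (∑ j ∈ Finset.range (v + 1), C (t j) * X ^ j).leadingCoeff = t v := by
  rw [leadingCoeff, natDegree_sum_range_C_mul_X_pow hv, coeff_sum_range_C_mul_X_pow,
    if_pos le_rfl]

theorem forall_coeff_of_coeff_succ {R : Type*} [Semiring R] (F : R[X]) {P : R → Prop}
    (zero : P 0) (succ : ∀ n ≠ 0, P (F.coeff (n + 1)) → P (F.coeff n)) :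
    ∀ n ≠ 0, P (F.coeff n) := by
  intro n hn
  obtain hlt | hle := lt_or_ge F.natDegree n
  · rwa [coeff_eq_zero_of_natDegree_lt hlt]
  refine Nat.decreasingInduction (motive := fun k _ => k ≠ 0 → P (F.coeff k))
    (fun k _ ih hk => succ k hk (ih k.succ_ne_zero)) (fun _ => ?_) (Nat.le_succ_of_le hle) hn
  rwa [coeff_eq_zero_of_natDegree_lt (Nat.lt_succ_self _)]

section AffineDeriv

variable {R : Type*} [CommRing R]

noncomputable def affineDeriv (α β : R[X]) : Derivation R R[X][X] R[X][X] :=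
  (derivative' : Derivation R R[X] R[X]).implicitDeriv (C α * X + C β)

variable (α β : R[X])

theorem affineDeriv_C (c : R[X]) : affineDeriv α β (C c) = C (derivative c) :=
  Derivation.implicitDeriv_C _ _ c

theorem coeff_affineDeriv (s : R[X][X]) (n : ℕ) :
    (affineDeriv α β s).coeff n = derivative (s.coeff n) + α * (n * s.coeff n)
      + β * ((n + 1) * s.coeff (n + 1)) := by
  rw [affineDeriv, Derivation.coeff_implicitDeriv, derivative'_apply, add_mul, coeff_add,
    mul_assoc, coeff_C_mul, coeff_C_mul, coeff_derivative, add_assoc]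
  cases n with
  | zero => simp
  | succ m => rw [mul_comm X, coeff_mul_X, coeff_derivative]; push_cast; ring

theorem coeff_affineDeriv_of_natDegree_lt {s : R[X][X]} {n : ℕ} (hn : s.natDegree < n) :
    (affineDeriv α β s).coeff n = 0 := by
  rw [coeff_affineDeriv, coeff_eq_zero_of_natDegree_lt hn,
    coeff_eq_zero_of_natDegree_lt (hn.trans (Nat.lt_succ_self n))]
  simp

variable [IsDomain R] [CharZero R]

theorem natDegree_affineDeriv {s : R[X][X]} (hα : α ≠ 0) (hs : s.natDegree ≠ 0) :
    (affineDeriv α β s).natDegree = s.natDegree ∧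
      (affineDeriv α β s).leadingCoeff.natDegree = α.natDegree + s.leadingCoeff.natDegree := by
  have hc : α * s.natDegree ≠ 0 := mul_ne_zero hα (by exact_mod_cast hs)
  have hg : s.leadingCoeff ≠ 0 :=
    leadingCoeff_ne_zero.2 (ne_zero_of_natDegree_gt (Nat.pos_of_ne_zero hs))
  have htop : (affineDeriv α β s).coeff s.natDegree
      = derivative s.leadingCoeff + α * s.natDegree * s.leadingCoeff := by
    rw [coeff_affineDeriv, coeff_eq_zero_of_natDegree_lt (Nat.lt_succ_self _)]
    simp only [mul_zero, add_zero, coeff_natDegree, mul_assoc]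
  have hdeg := degree_derivative_add_mul hc hg
  have hne : (affineDeriv α β s).coeff s.natDegree ≠ 0 := by
    rw [htop]
    intro h
    rw [h, degree_zero, eq_comm, degree_eq_bot] at hdeg
    exact mul_ne_zero hc hg hdeg
  have hnat : (affineDeriv α β s).natDegree = s.natDegree :=
    natDegree_eq_of_le_of_coeff_ne_zero
      (natDegree_le_iff_coeff_eq_zero.2 fun _ => coeff_affineDeriv_of_natDegree_lt α β) hne
  refine ⟨hnat, ?_⟩
  rw [leadingCoeff, hnat, htop, natDegree_eq_of_degree_eq hdeg, natDegree_mul hc hg,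
    natDegree_mul hα (by exact_mod_cast hs), natDegree_natCast, add_zero]

theorem affineDeriv_add_ne_X_pow (hα : 0 < α.natDegree) {s r : R[X][X]} {n : ℕ} (hn : n ≠ 0)
    (hr : r.natDegree < n) : affineDeriv α β s + r ≠ X ^ n := by
  intro h
  have hδ : affineDeriv α β s = X ^ n - r := eq_sub_of_add_eq h
  have hdeg : r.degree < (X ^ n : R[X][X]).degree := degree_lt_degree (by rwa [natDegree_X_pow])
  by_cases hs : s.natDegree = 0
  · rw [eq_C_of_natDegree_eq_zero hs, affineDeriv_C] at hδ
    have := congrArg natDegree hδ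
    rw [natDegree_C, natDegree_sub_eq_left_of_natDegree_lt (by rwa [natDegree_X_pow]),
      natDegree_X_pow] at this
    exact hn this.symm
  · have := (natDegree_affineDeriv α β (ne_zero_of_natDegree_gt hα) hs).2
    rw [hδ, leadingCoeff_sub_of_degree_lt hdeg, leadingCoeff_X_pow, natDegree_one] at this
    omega

theorem exists_C_of_affineDeriv_add_mul_C_eq_zero {b : R[X][X]}
    (hb : b.leadingCoeff.natDegree < α.natDegree) {c : R[X]}
    (hc : b.natDegree = 0 ∨ c.natDegree = 0) {s : R[X][X]}
    (h : affineDeriv α β s + b * C c = 0) :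
    ∃ c', s = C c' ∧ (b.natDegree = 0 ∨ c'.natDegree = 0) := by
  have hα : α ≠ 0 := ne_zero_of_natDegree_gt hb
  have hδ : affineDeriv α β s = -(b * C c) := eq_neg_of_add_eq_zero_left h
  have hs : s.natDegree = 0 := by
    by_contra hs
    obtain ⟨hdeg, hlead⟩ := natDegree_affineDeriv α β hα hs
    rw [hδ, natDegree_neg] at hdeg
    rw [hδ, leadingCoeff_neg, leadingCoeff_mul, leadingCoeff_C, natDegree_neg] at hlead
    rcases hc with hb0 | hc0
    · have := natDegree_mul_C_le b c
      omega
    · have := natDegree_mul_le (p := b.leadingCoeff) (q := c)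
      omega
  obtain ⟨s0, rfl⟩ : ∃ s0, s = C s0 := ⟨_, eq_C_of_natDegree_eq_zero hs⟩
  rcases eq_or_ne b.natDegree 0 with hb0 | hb0
  · exact ⟨s0, rfl, .inl hb0⟩
  have hc0 : c = 0 := by
    have := congrArg (coeff · b.natDegree) h
    simp only [affineDeriv_C, coeff_add, coeff_C, hb0, if_false, coeff_mul_C, coeff_natDegree,
      coeff_zero, zero_add, mul_eq_zero, leadingCoeff_eq_zero] at this
    exact this.resolve_left (by rintro rfl; exact hb0 natDegree_zero)
  rw [hc0, map_zero, mul_zero, add_zero, affineDeriv_C, C_eq_zero] at h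
  exact ⟨s0, rfl, .inr (derivative_eq_zero.1 h)⟩

theorem implicitDeriv_affineDeriv_ne_C_X_pow {b : R[X][X]}
    (hb : b.leadingCoeff.natDegree < α.natDegree) (F : R[X][X][X]) :
    (affineDeriv α β).implicitDeriv (C b) F ≠ C (X ^ (b.natDegree + 1)) := by
  intro hF
  have hcoeff (n : ℕ) :
      affineDeriv α β (F.coeff n) + b * (F.coeff (n + 1) * ((n : R[X][X]) + 1))
        = (C (X ^ (b.natDegree + 1))).coeff n := by
    rw [← hF, Derivation.coeff_implicitDeriv, coeff_C_mul, coeff_derivative]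
  have hconst : ∀ n ≠ 0, ∃ c, F.coeff n = C c ∧ (b.natDegree = 0 ∨ c.natDegree = 0) := by
    refine F.forall_coeff_of_coeff_succ
      (P := fun u => ∃ c, u = C c ∧ (b.natDegree = 0 ∨ c.natDegree = 0))
      ⟨0, C_0.symm, .inr natDegree_zero⟩ ?_
    rintro n hn ⟨c, hc, hbc⟩
    refine exists_C_of_affineDeriv_add_mul_C_eq_zero α β hb (c := c * C ((n : R) + 1)) ?_ ?_
    · exact hbc.imp_right fun (h : c.natDegree = 0) =>
        Nat.eq_zero_of_le_zero (h ▸ natDegree_mul_C_le c _)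
    · have := hcoeff n
      rw [coeff_C, if_neg hn, hc] at this
      simpa [C_mul] using this
  obtain ⟨c, hc, -⟩ := hconst 1 one_ne_zero
  refine affineDeriv_add_ne_X_pow α β (hb.trans_le' (Nat.zero_le _)) (Nat.succ_ne_zero _) ?_
    (by simpa only [coeff_C_zero] using hcoeff 0)
  rw [zero_add, hc, Nat.cast_zero, zero_add, mul_one]
  exact Nat.lt_succ_of_le (natDegree_mul_C_le b c)

end AffineDeriv

end Polynomial

namespace MvPolynomial

theorem algHom_apply_derivation_eq {σ R B : Type*} [CommSemiring R] [CommSemiring B]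
    [Algebra R B] (φ : MvPolynomial σ R →ₐ[R] B)
    (D : Derivation R (MvPolynomial σ R) (MvPolynomial σ R)) (E : Derivation R B B)
    (h : ∀ i, φ (D (X i)) = E (φ (X i))) (f : MvPolynomial σ R) : φ (D f) = E (φ f) := by
  induction f using MvPolynomial.induction_on with
  | C a => simp [← algebraMap_eq]
  | add p q hp hq => simp only [map_add, hp, hq]
  | mul_X p i hp => simp only [Derivation.leibniz, map_add, map_mul, smul_eq_mul, hp, h]

theorem mem_supported_singleton_iff {σ R : Type*} [CommSemiring R] {i : σ}
    {p : MvPolynomial σ R} : p ∈ supported R {i} ↔ ∃ q : R[X], q.toMvPolynomial i = p := by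
  rw [supported, Set.image_singleton, Algebra.adjoin_singleton_eq_range_aeval]
  rfl

theorem degreeOf_toMvPolynomial_zero {R : Type*} [CommSemiring R] {n : ℕ}
    (q : R[X]) : degreeOf 0 (q.toMvPolynomial (0 : Fin (n + 1))) = q.natDegree := by
  have : finSuccEquiv R n (q.toMvPolynomial 0) = q.map C := by
    induction q using Polynomial.induction_on' <;>
      simp_all [Polynomial.toMvPolynomial, ← Polynomial.C_mul_X_pow_eq_monomial,
        finSuccEquiv_apply]
  rw [← natDegree_finSuccEquiv, this, Polynomial.natDegree_map_eq_of_injective (C_injective _ _)]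

noncomputable def toNested (R : Type*) [CommSemiring R] :
    MvPolynomial (Fin 3) R →ₐ[R] R[X][X][X] :=
  aeval (![Polynomial.C (Polynomial.C Polynomial.X), Polynomial.C Polynomial.X, Polynomial.X] :
    Fin 3 → R[X][X][X])

theorem toNested_X {R : Type*} [CommSemiring R] (i : Fin 3) :
    toNested R (X i) =
      ![Polynomial.C (Polynomial.C Polynomial.X), Polynomial.C Polynomial.X, Polynomial.X] i :=
  aeval_X _ i

theorem toNested_toMvPolynomial {R : Type*} [CommSemiring R] (q : R[X]) :
    toNested R (q.toMvPolynomial 0) = Polynomial.C (Polynomial.C q) := by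
  rw [toNested, aeval_toMvPolynomial]
  exact (Polynomial.aeval_algebraMap_apply _ Polynomial.X q).trans
    (congrArg _ (Polynomial.aeval_X_left_apply q))

end MvPolynomial

/-- For `D = ∂_{x₁} + (a₂ x₂ + b₂) ∂_{x₂} + b₃ ∂_{x₃}` with
`a₂, b₂ ∈ K[x₁]` and `b₃ = Σ_{j=0}^{v} b₃⁽ʲ⁾ x₂^j` where each `b₃⁽ʲ⁾ ∈ K[x₁]` and
`b₃⁽ᵛ⁾ ≠ 0`: if `deg_{x₁} a₂ > deg_{x₁} b₃⁽ᵛ⁾`, then `x₂^(v+1) ∉ Im D`. -/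
theorem statement18 (K : Type*) [Field K] [CharZero K]
    (a2 b2 b3 : MvPolynomial (Fin 3) K)
    (ha2 : a2 ∈ supported K ({0} : Set (Fin 3)))
    (hb2 : b2 ∈ supported K ({0} : Set (Fin 3)))
    (v : ℕ) (b3c : ℕ → MvPolynomial (Fin 3) K)
    (hb3c : ∀ j : ℕ, b3c j ∈ supported K ({0} : Set (Fin 3)))
    (hb3 : b3 = ∑ j ∈ Finset.range (v + 1), b3c j * X 1 ^ j)
    (hb3v : b3c v ≠ 0)
    (D : Derivation K (MvPolynomial (Fin 3) K) (MvPolynomial (Fin 3) K))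
    (hD1 : D (X 0) = 1)
    (hD2 : D (X 1) = a2 * X 1 + b2)
    (hD3 : D (X 2) = b3)
    (hdeg : degreeOf (0 : Fin 3) (b3c v) < degreeOf (0 : Fin 3) a2) :
    ¬ ∃ f : MvPolynomial (Fin 3) K, D f = X 1 ^ (v + 1) := by
  rintro ⟨f, hf⟩
  obtain ⟨α, rfl⟩ := mem_supported_singleton_iff.1 ha2
  obtain ⟨β, rfl⟩ := mem_supported_singleton_iff.1 hb2
  choose t ht using fun j => mem_supported_singleton_iff.1 (hb3c j)
  obtain rfl : b3c = fun j => (t j).toMvPolynomial 0 := funext fun j => (ht j).symm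
  subst hb3
  have htv : t v ≠ 0 := fun h => hb3v (by simp [h])
  set b : K[X][X] := ∑ j ∈ Finset.range (v + 1), Polynomial.C (t j) * Polynomial.X ^ j
  have hD (g) : toNested K (D g)
      = (Polynomial.affineDeriv α β).implicitDeriv (Polynomial.C b) (toNested K g) := by
    refine algHom_apply_derivation_eq (B := K[X][X][X]) _ D _ (fun i => ?_) g
    fin_cases i <;>
      simp [toNested_X, toNested_toMvPolynomial, hD1, hD2, hD3, b, Derivation.implicitDeriv_C,
        Derivation.implicitDeriv_X, Polynomial.affineDeriv]
  refine Polynomial.implicitDeriv_affineDeriv_ne_C_X_pow α β (b := b) ?_ (toNested K f) ?_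
  · rwa [Polynomial.leadingCoeff_sum_range_C_mul_X_pow htv, ← degreeOf_toMvPolynomial_zero,
      ← degreeOf_toMvPolynomial_zero]
  · rw [← hD, hf, Polynomial.natDegree_sum_range_C_mul_X_pow htv]
    simp [toNested_X]
end
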